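/- Let M = 𝐚 + 𝒜 be the sum of a vector and a bivector in Cl(3,0). Then the product M · reverse(M) · involute(M) · involute(reverse(M)) equals the scalar (s² + 4w²)·1, where s = a₁² + a₂² + a₃² - a₁₂² - a₁₃² - a₂₃² and w = a₁a₂₃ - a₂a₁₃ + a₃a₁₂. -/

import Mathlib

open Real CliffordAlgebra

noncomputable section

/-- The quadratic form of signature (3,0): `Q(x) = x₁² + x₂² + x₃²`. -/
def Q30 : QuadraticForm ℝ (Fin 3 → ℝ) := QuadraticMap.weightedSumSquares ℝ ![1, 1, 1]

/-- The real Clifford algebra Cl(3,0). -/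
abbrev Cl30 := CliffordAlgebra Q30

/-- The canonical (module) topology on the finite-dimensional real algebra Cl(3,0). -/
instance : TopologicalSpace Cl30 := moduleTopology ℝ Cl30

/-- The orthonormal generators `e₁, e₂, e₃` (indexed here by `0, 1, 2`). -/
def e (i : Fin 3) : Cl30 := ι Q30 (Pi.single i 1)

/-- The pseudoscalar `I = e₁e₂e₃`. -/
def I3 : Cl30 := e 0 * e 1 * e 2

/-- The exponential `exp M = ∑ₖ Mᵏ/k!` in Cl(3,0). -/
def expCl (M : Cl30) : Cl30 := ∑' n : ℕ, (n.factorial : ℝ)⁻¹ • M ^ n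

/-- `atan2 y x` is the argument in `(-π, π]` of the complex number `x + iy`. -/
def atan2 (y x : ℝ) : ℝ := Complex.arg ⟨x, y⟩

/-!
Write `M = v + B` with `v` a vector and `B` a bivector. Reversion negates `B` and the grade
involution negates `v`, so the determinant is `(v + B)(v - B) · (v - B)(v + B)`. The two factors
are `α ± u` with the scalar `α = v² - B² = |a|² + |B|²` and the vector `u = Bv - vB`, hence the
determinant is the scalar `α² - u²`. That `α² - |u|² = s² + 4w²` is Lagrange's identity
`|a|²|b|² = (a·b)² + |a × b|²` for `a` and the vector `b` dual to `B`.
-/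

section
variable {R M : Type*} [CommRing R] [AddCommGroup M] [Module R M] {Q : QuadraticForm R M}

theorem mul_reverse_mul_involute_mul_involute_reverse_ι_add (m : M) {B : CliffordAlgebra Q}
    (hrev : reverse B = -B) (hinv : involute B = B) :
    (ι Q m + B) * reverse (ι Q m + B) * involute (ι Q m + B) * involute (reverse (ι Q m + B)) =
      (ι Q m + B) * (ι Q m - B) * ((ι Q m - B) * (ι Q m + B)) := by
  simp only [map_add, map_neg, reverse_ι, involute_ι, hrev, hinv]
  noncomm_ring

end

theorem Commute.add_mul_sub_mul_sub_mul_add {A : Type*} [Ring A] {x y : A}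
    (h : Commute (x * x - y * y) (y * x - x * y)) :
    (x + y) * (x - y) * ((x - y) * (x + y)) = (x * x - y * y) ^ 2 - (y * x - x * y) ^ 2 := by
  have h₁ : (x + y) * (x - y) = (x * x - y * y) + (y * x - x * y) := by noncomm_ring
  have h₂ : (x - y) * (x + y) = (x * x - y * y) - (y * x - x * y) := by noncomm_ring
  rw [h₁, h₂, ← h.mul_self_sub_mul_self_eq, sq, sq]

lemma Q30_apply (x : Fin 3 → ℝ) : Q30 x = x 0 ^ 2 + x 1 ^ 2 + x 2 ^ 2 := by
  simp [Q30, QuadraticMap.weightedSumSquares_apply, Fin.sum_univ_three, sq]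

lemma isOrtho_single {i j : Fin 3} (h : i ≠ j) :
    Q30.IsOrtho (Pi.single i 1) (Pi.single j 1) := by
  rw [QuadraticMap.isOrtho_def, Q30_apply, Q30_apply, Q30_apply]
  fin_cases i <;> fin_cases j <;> simp_all

lemma ι_Q30_eq (x : Fin 3 → ℝ) : ι Q30 x = x 0 • e 0 + x 1 • e 1 + x 2 • e 2 := by
  simp only [e, ← map_smul, ← map_add]
  congr 1
  ext i
  fin_cases i <;> simp

lemma reverse_e (i : Fin 3) : reverse (e i) = e i := reverse_ι _

lemma involute_e (i : Fin 3) : involute (e i) = -e i := involute_ι _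

lemma e_mul_self (i : Fin 3) : e i * e i = 1 := by
  rw [e, ι_sq_scalar, Q30_apply]
  fin_cases i <;> simp

lemma e_mul_e_mul_self (i : Fin 3) (x : Cl30) : e i * (e i * x) = x := by
  rw [← mul_assoc, e_mul_self, one_mul]

lemma e_mul_e_of_lt {i j : Fin 3} (h : i < j) : e j * e i = -(e i * e j) :=
  ι_mul_ι_comm_of_isOrtho (isOrtho_single h.ne')

lemma e_mul_e_mul_of_lt {i j : Fin 3} (h : i < j) (x : Cl30) :
    e j * (e i * x) = -(e i * (e j * x)) :=
  ι_mul_ι_mul_of_isOrtho x (isOrtho_single h.ne')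

def bivector (b12 b13 b23 : ℝ) : Cl30 := b12 • (e 0 * e 1) + b13 • (e 0 * e 2) + b23 • (e 1 * e 2)

section
variable (b12 b13 b23 : ℝ)

lemma reverse_bivector : reverse (bivector b12 b13 b23) = -bivector b12 b13 b23 := by
  simp only [bivector, map_add, map_smul, reverse.map_mul, reverse_e, e_mul_e_of_lt, Fin.reduceLT,
    smul_neg, neg_add]

lemma involute_bivector : involute (bivector b12 b13 b23) = bivector b12 b13 b23 := by
  simp only [bivector, map_add, map_smul, map_mul, involute_e, neg_mul_neg]

lemma bivector_mul_self :
    bivector b12 b13 b23 * bivector b12 b13 b23 =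
      algebraMap ℝ Cl30 (-(b12 ^ 2 + b13 ^ 2 + b23 ^ 2)) := by
  rw [Algebra.algebraMap_eq_smul_one, bivector]
  simp only [mul_add, add_mul, smul_mul_assoc, mul_smul_comm, mul_assoc, mul_neg, e_mul_self,
    e_mul_e_mul_self, e_mul_e_of_lt, e_mul_e_mul_of_lt, Fin.reduceLT, mul_one]
  module

lemma bivector_mul_ι_sub_ι_mul_bivector (x : Fin 3 → ℝ) :
    bivector b12 b13 b23 * ι Q30 x - ι Q30 x * bivector b12 b13 b23 =
      ι Q30 (2 • ![b12 * x 1 + b13 * x 2, b23 * x 2 - b12 * x 0, -(b13 * x 0) - b23 * x 1]) := by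
  rw [ι_Q30_eq, ι_Q30_eq, bivector]
  simp only [Pi.smul_apply, Matrix.cons_val_zero, Matrix.cons_val_one, Matrix.cons_val_two,
    Matrix.head_cons, Matrix.tail_cons]
  simp only [mul_add, add_mul, smul_mul_assoc, mul_smul_comm, mul_assoc, mul_neg, e_mul_self,
    e_mul_e_mul_self, e_mul_e_of_lt, e_mul_e_mul_of_lt, Fin.reduceLT, mul_one]
  module

end

/-- the determinant of a vector + bivector in Cl(3,0) equals `s² + 4w²`. -/
theorem determinant_vector_bivector_Cl30
    (a1 a2 a3 a12 a13 a23 s w : ℝ) (M : Cl30)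
    (hM : M = (a1 • e 0 + a2 • e 1 + a3 • e 2) +
      (a12 • (e 0 * e 1) + a13 • (e 0 * e 2) + a23 • (e 1 * e 2)))
    (hs : s = a1 ^ 2 + a2 ^ 2 + a3 ^ 2 - a12 ^ 2 - a13 ^ 2 - a23 ^ 2)
    (hw : w = a1 * a23 - a2 * a13 + a3 * a12) :
    M * reverse M * involute M * involute (reverse M) =
      algebraMap ℝ Cl30 (s ^ 2 + 4 * w ^ 2) := by
  have hvB : M = ι Q30 ![a1, a2, a3] + bivector a12 a13 a23 := by
    rw [hM, ι_Q30_eq]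
    rfl
  have hscalar : ι Q30 ![a1, a2, a3] * ι Q30 ![a1, a2, a3] -
      bivector a12 a13 a23 * bivector a12 a13 a23 =
      algebraMap ℝ Cl30 (a1 ^ 2 + a2 ^ 2 + a3 ^ 2 + (a12 ^ 2 + a13 ^ 2 + a23 ^ 2)) := by
    rw [ι_sq_scalar, bivector_mul_self, ← map_sub, Q30_apply]
    congr 1
    simp only [Matrix.cons_val_zero, Matrix.cons_val_one, Matrix.cons_val_two, Matrix.head_cons,
      Matrix.tail_cons]
    ring
  rw [hvB, mul_reverse_mul_involute_mul_involute_reverse_ι_add _ (reverse_bivector ..)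
      (involute_bivector ..), Commute.add_mul_sub_mul_sub_mul_add (hscalar ▸ Algebra.commutes' _ _),
    hscalar, bivector_mul_ι_sub_ι_mul_bivector, sq (ι Q30 _), ι_sq_scalar, ← map_pow, ← map_sub,
    Q30_apply, hs, hw]
  congr 1
  simp only [Pi.smul_apply, Matrix.cons_val_zero, Matrix.cons_val_one,
    Matrix.cons_val_two, Matrix.head_cons, Matrix.tail_cons]
  ring
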